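/- For every real number C, let ℓ_C = ∫_1^{√(1+e^{2C})} dξ/√(2C − log(ξ² − 1)). There exists a continuous even function u : ℝ → ℝ such that u(0) = √(1 + e^{2C}), u(ℓ_C) = u(−ℓ_C) = 1, 1 < u(x) ≤ √(1 + e^{2C}) for |x| < ℓ_C, 0 < u(x) < 1 for |x| > ℓ_C, u(x) → 0 as |x| → ∞, u is twice continuously differentiable on ℝ \ {−ℓ_C, ℓ_C}, satisfies (1 − u(x)²)·u''(x) = u(x) for all x ∉ {−ℓ_C, ℓ_C}, and satisfies the first-order invariants u'(x)² = 2C − log(u(x)² − 1) for 0 < |x| < ℓ_C and u'(x)² = −log(1 − u(x)²) for |x| > ℓ_C. -/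

import Mathlib

/-!
Along a solitary wave the quantity `u'² + log |1 - u²|` is constant on each side of the singular
level `u = 1`: it is `2C` where `u > 1` and `0` where `u < 1`. Both branches read `u'² = V(u)` for
one potential `V`, and the half-profile `x ≥ 0` is the inverse of the time map
`X(v) = ∫_v^b dξ / √V(ξ)`, where `b = √(1 + e^{2C})` is the zero of `V` on the upper branch.
Since `V` vanishes linearly at `b` and `1 / √V` stays bounded near `1`, `X` is finite and strictly
decreasing on `(0, b]`; since `V(ξ) ~ ξ²` as `ξ → 0`, `X(v) → ∞`. The inverse solves
`u' = -√V(u)`, so `u'' = V'(u) / 2 = u / (1 - u²)` away from `u = 1`, and at the crest both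
derivatives extend by continuity because `V(b) = 0`.
-/
open Filter Set MeasureTheory Topology

theorem intervalIntegral_pos_of_pos_off_countable {f : ℝ → ℝ} {a b : ℝ} {s : Set ℝ}
    (hf : 0 ≤ f) (hfi : IntervalIntegrable f volume a b) (hs : s.Countable)
    (hpos : ∀ x ∈ Ioo a b \ s, 0 < f x) (hab : a < b) : 0 < ∫ x in a..b, f x := by
  rw [intervalIntegral.integral_pos_iff_support_of_nonneg_ae (.of_forall hf) hfi]
  refine ⟨hab, ?_⟩
  calc (0 : ENNReal) < volume (Ioo a b) := by simpa using hab
    _ = volume (Ioo a b \ s) := (measure_sdiff_null (hs.measure_zero volume)).symm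
    _ ≤ volume (Function.support f ∩ Ioc a b) :=
      measure_mono fun x hx ↦ ⟨(hpos x hx).ne', Ioo_subset_Ioc_self hx.1⟩

theorem StrictAntiOn.continuousOn_Ici_of_image_eq_Ioc {f : ℝ → ℝ} {a b c : ℝ}
    (hf : StrictAntiOn f (Ici a)) (himg : f '' Ici a = Ioc c b) : ContinuousOn f (Ici a) := by
  have hmono : StrictMonoOn (-f) (Ici a) := fun x hx y hy hxy ↦ neg_lt_neg (hf hx hy hxy)
  have hclosure : closure ((-f) '' Ici a) = Icc (-b) (-c) := by
    have hfc : c < b := by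
      obtain ⟨h1, h2⟩ : f a ∈ Ioc c b := himg ▸ mem_image_of_mem f self_mem_Ici
      exact h1.trans_le h2
    rw [show (-f) '' Ici a = Neg.neg '' (f '' Ici a) from image_comp Neg.neg f _, himg,
      image_neg_Ioc, closure_Ico (neg_lt_neg hfc).ne]
  have hfa : f a ∈ Ioc c b := himg ▸ mem_image_of_mem f self_mem_Ici
  suffices ContinuousOn (-f) (Ici a) by simpa using this.neg
  intro x hx
  rcases (mem_Ici.1 hx).eq_or_lt with rfl | hlt
  · refine hmono.continuousWithinAt_right_of_closure_image_mem_nhdsWithin self_mem_nhdsWithin ?_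
    rw [hclosure]
    exact Icc_mem_nhdsGE_of_mem ⟨neg_le_neg hfa.2, neg_lt_neg hfa.1⟩
  · refine (hmono.continuousAt_of_closure_image_mem_nhds (Ici_mem_nhds hlt) ?_).continuousWithinAt
    have hfx : f x ∈ Ioc c b := himg ▸ mem_image_of_mem f hx
    rw [hclosure]
    exact Icc_mem_nhds (neg_lt_neg ((hf self_mem_Ici hx hlt).trans_le hfa.2)) (neg_lt_neg hfx.1)

theorem Function.Even.deriv {f : ℝ → ℝ} (hf : f.Even) : (deriv f).Odd := fun x ↦ by
  simpa [hf.eq] using deriv_comp_neg (f := f) (x := -x)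

theorem Function.Even.hasDerivAt_of_neg {f : ℝ → ℝ} {f' x : ℝ} (hf : f.Even)
    (h : HasDerivAt f f' (-x)) : HasDerivAt f (-f') x := by
  simpa [Function.comp_def, hf.eq] using h.comp x (hasDerivAt_neg x)

theorem Function.Odd.hasDerivAt_of_neg {f : ℝ → ℝ} {f' x : ℝ} (hf : f.Odd)
    (h : HasDerivAt f f' (-x)) : HasDerivAt f f' x := by
  simpa [Function.comp_def, hf.eq, Pi.neg_def] using (h.comp x (hasDerivAt_neg x)).neg

theorem hasDerivAt_of_tendsto_deriv_nhdsNE {f : ℝ → ℝ} {a e : ℝ}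
    (hdiff : ∀ᶠ y in 𝓝[≠] a, DifferentiableAt ℝ f y) (hcont : ContinuousAt f a)
    (hlim : Tendsto (deriv f) (𝓝[≠] a) (𝓝 e)) : HasDerivAt f e a := by
  have hs : ∀ {t : Set ℝ}, t ⊆ {a}ᶜ → {y | DifferentiableAt ℝ f y} ∈ 𝓝[t] a :=
    fun ht ↦ nhdsWithin_mono a ht hdiff
  have hdiffOn : DifferentiableOn ℝ f {y | DifferentiableAt ℝ f y} :=
    fun y hy ↦ hy.differentiableWithinAt
  have hright := hasDerivWithinAt_Ici_of_tendsto_deriv hdiffOn hcont.continuousWithinAt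
    (hs fun y hy ↦ ne_of_gt hy) (hlim.mono_left (nhdsWithin_mono a fun y hy ↦ ne_of_gt hy))
  have hleft := hasDerivWithinAt_Iic_of_tendsto_deriv hdiffOn hcont.continuousWithinAt
    (hs fun y hy ↦ ne_of_lt hy) (hlim.mono_left (nhdsWithin_mono a fun y hy ↦ ne_of_lt hy))
  simpa [Iic_union_Ici] using hleft.union hright

theorem hasDerivAt_deriv_of_deriv_eq_neg_sqrt {u V : ℝ → ℝ} {x V' : ℝ}
    (hu : ∀ᶠ y in 𝓝 x, HasDerivAt u (-√(V (u y))) y) (hV : HasDerivAt V V' (u x))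
    (hpos : 0 < V (u x)) : HasDerivAt (deriv u) (V' / 2) x := by
  have hderiv : deriv u =ᶠ[𝓝 x] fun y ↦ -√(V (u y)) := hu.mono fun y hy ↦ hy.deriv
  have hchain := ((hV.comp x hu.self_of_nhds).sqrt hpos.ne').neg
  refine (hchain.congr_of_eventuallyEq hderiv).congr_deriv ?_
  have : √(V (u x)) ≠ 0 := (Real.sqrt_pos.2 hpos).ne'
  simp only [Function.comp_apply]
  field_simp

theorem contDiffOn_two_of_hasDerivAt_deriv {f g : ℝ → ℝ} {s : Set ℝ} (hs : IsOpen s)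
    (hf : DifferentiableOn ℝ f s) (hg : ∀ x ∈ s, HasDerivAt (deriv f) (g x) x)
    (hgc : ContinuousOn g s) : ContDiffOn ℝ 2 f s := by
  rw [show (2 : WithTop ℕ∞) = 0 + 1 + 1 from rfl, contDiffOn_succ_iff_deriv_of_isOpen hs,
    contDiffOn_succ_iff_deriv_of_isOpen hs, contDiffOn_zero]
  exact ⟨hf, by simp, fun x hx ↦ (hg x hx).differentiableAt.differentiableWithinAt, by simp,
    hgc.congr fun x hx ↦ (hg x hx).deriv⟩

theorem intervalIntegrable_inv_sqrt_sub {a c : ℝ} (hac : a ≤ c) :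
    IntervalIntegrable (fun ξ ↦ (√(c - ξ))⁻¹) volume a c := by
  have h := (intervalIntegral.intervalIntegrable_rpow' (a := 0) (b := c - a)
    (by norm_num : (-1 : ℝ) < -(1 / 2))).comp_sub_left c
  rw [sub_zero, sub_sub_cancel] at h
  refine h.symm.congr fun ξ hξ ↦ ?_
  rw [uIoc_of_le hac] at hξ
  simp only [Real.sqrt_eq_rpow, ← Real.rpow_neg (sub_nonneg.2 hξ.2)]

theorem notMem_neg_pair_iff_abs_ne {a x : ℝ} (ha : 0 ≤ a) :
    x ∉ ({-a, a} : Set ℝ) ↔ |x| ≠ a := by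
  rw [ne_eq, abs_eq ha]
  simp [or_comm]

noncomputable section

namespace SolitaryWave

variable (C : ℝ)

def peak : ℝ := √(1 + Real.exp (2 * C))

/-- `Real.log` is `log |·|`, so this is `2E - log |1 - ξ²|` with energy `E = C` on the branch
`ξ > 1` and `E = 0` on the branch `ξ < 1`. -/
def potential (ξ : ℝ) : ℝ := (if 1 < ξ then 2 * C else 0) - Real.log (1 - ξ ^ 2)

lemma peak_sq_sub_one : peak C ^ 2 - 1 = Real.exp (2 * C) := by
  rw [peak, Real.sq_sqrt (by positivity)]
  ring

lemma one_lt_peak : 1 < peak C := by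
  have h := peak_sq_sub_one C
  have : 0 ≤ peak C := Real.sqrt_nonneg _
  nlinarith [Real.exp_pos (2 * C)]

lemma one_mem_Ioc_peak : (1 : ℝ) ∈ Ioc 0 (peak C) := ⟨one_pos, (one_lt_peak C).le⟩

lemma peak_mem_Ioc_peak : peak C ∈ Ioc 0 (peak C) :=
  right_mem_Ioc.2 (zero_lt_one.trans (one_lt_peak C))

variable {C}

lemma potential_of_one_lt {ξ : ℝ} (hξ : 1 < ξ) :
    potential C ξ = 2 * C - Real.log (ξ ^ 2 - 1) := by
  rw [potential, if_pos hξ, ← Real.log_neg_eq_log, neg_sub]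

lemma potential_of_le_one {ξ : ℝ} (hξ : ξ ≤ 1) :
    potential C ξ = -Real.log (1 - ξ ^ 2) := by
  rw [potential, if_neg hξ.not_gt, zero_sub]

lemma potential_peak : potential C (peak C) = 0 := by
  rw [potential_of_one_lt (one_lt_peak C), peak_sq_sub_one, Real.log_exp, sub_self]

lemma hasDerivAt_potential {ξ : ℝ} (hξ : ξ ^ 2 ≠ 1) :
    HasDerivAt (potential C) (2 * ξ / (1 - ξ ^ 2)) ξ := by
  have hξ1 : ξ ≠ 1 := by rintro rfl; simp at hξ
  have henergy : (fun y ↦ if 1 < y then 2 * C else 0) =ᶠ[𝓝 ξ]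
      fun _ ↦ if 1 < ξ then 2 * C else 0 := by
    rcases hξ1.lt_or_gt with h | h
    · filter_upwards [eventually_lt_nhds h] with y hy
      simp [hy.not_gt, h.not_gt]
    · filter_upwards [eventually_gt_nhds h] with y hy
      simp [hy, h]
  have hlog := ((hasDerivAt_pow 2 ξ).const_sub 1).log (sub_ne_zero.2 (Ne.symm hξ))
  refine ((hlog.const_sub (if 1 < ξ then 2 * C else 0)).congr_of_eventuallyEq ?_).congr_deriv ?_
  · filter_upwards [henergy] with y hy
    simp only [potential, hy]
  · push_cast; ring

lemma sub_mul_exp_le_potential {ξ : ℝ} (h1 : 1 < ξ) (hb : ξ ≤ peak C) :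
    (peak C - ξ) * Real.exp (-(2 * C)) ≤ potential C ξ := by
  have hlog := Real.log_le_sub_one_of_pos
    (mul_pos (by nlinarith : (0 : ℝ) < ξ ^ 2 - 1) (Real.exp_pos (-(2 * C))))
  rw [Real.log_mul (by nlinarith) (Real.exp_pos _).ne', Real.log_exp] at hlog
  have hexp : (ξ ^ 2 - 1) * Real.exp (-(2 * C)) =
      1 - (peak C ^ 2 - ξ ^ 2) * Real.exp (-(2 * C)) := by
    rw [show ξ ^ 2 - 1 = Real.exp (2 * C) - (peak C ^ 2 - ξ ^ 2) by
        rw [← peak_sq_sub_one]; ring, sub_mul, ← Real.exp_add, add_neg_cancel, Real.exp_zero]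
  have hsq : (peak C - ξ) * Real.exp (-(2 * C)) ≤
      (peak C ^ 2 - ξ ^ 2) * Real.exp (-(2 * C)) := by
    refine mul_le_mul_of_nonneg_right ?_ (Real.exp_pos _).le
    nlinarith [one_lt_peak C]
  rw [potential_of_one_lt h1]
  linarith

lemma potential_le_sq_of_le_half {ξ : ℝ} (h0 : 0 ≤ ξ) (hξ : ξ ≤ 1 / 2) :
    potential C ξ ≤ (2 * ξ) ^ 2 := by
  have hpos : 0 < 1 - ξ ^ 2 := by nlinarith
  have hlog := Real.one_sub_inv_le_log_of_pos hpos
  rw [potential_of_le_one (by linarith)]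
  have : (1 - ξ ^ 2)⁻¹ ≤ 1 + 4 * ξ ^ 2 := by
    rw [inv_le_iff_one_le_mul₀ hpos]
    nlinarith [mul_nonneg (sq_nonneg ξ) (by nlinarith : (0 : ℝ) ≤ 1 / 4 - ξ ^ 2)]
  nlinarith

lemma potential_pos {ξ : ℝ} (h0 : 0 < ξ) (hb : ξ < peak C) (h1 : ξ ≠ 1) :
    0 < potential C ξ := by
  rcases h1.lt_or_gt with h | h
  · rw [potential_of_le_one h.le, neg_pos]
    exact Real.log_neg (by nlinarith) (by nlinarith)
  · exact (mul_pos (sub_pos.2 hb) (Real.exp_pos _)).trans_le (sub_mul_exp_le_potential h hb.le)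

lemma potential_le_potential {v ξ : ℝ} (h0 : 0 ≤ v) (hvξ : v ≤ ξ) (hξ : ξ < 1) :
    potential C v ≤ potential C ξ := by
  rw [potential_of_le_one (by linarith), potential_of_le_one hξ.le, neg_le_neg_iff]
  exact Real.log_le_log (by nlinarith) (by nlinarith)

variable (C) in
def timeDensity (ξ : ℝ) : ℝ := 1 / √(potential C ξ)

variable (C) in
/-- The time a solution of `u'² = potential C u` needs to descend from the peak to level `v`. -/
def timeMap (v : ℝ) : ℝ := ∫ ξ in v..peak C, timeDensity C ξ

lemma timeDensity_nonneg (ξ : ℝ) : 0 ≤ timeDensity C ξ := by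
  unfold timeDensity; positivity

lemma timeDensity_pos {ξ : ℝ} (h0 : 0 < ξ) (hb : ξ < peak C) (h1 : ξ ≠ 1) :
    0 < timeDensity C ξ := by
  have := potential_pos h0 hb h1
  unfold timeDensity; positivity

lemma measurable_timeDensity : Measurable (timeDensity C) :=
  measurable_const.div
    ((Measurable.ite measurableSet_Ioi measurable_const measurable_const).sub (by fun_prop)).sqrt

lemma continuousAt_timeDensity {ξ : ℝ} (h0 : 0 < ξ) (hb : ξ < peak C) (h1 : ξ ≠ 1) :
    ContinuousAt (timeDensity C) ξ :=
  continuousAt_const.div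
    (hasDerivAt_potential ((pow_eq_one_iff_of_nonneg h0.le two_ne_zero).not.2 h1)).continuousAt.sqrt
    (Real.sqrt_pos.2 (potential_pos h0 hb h1)).ne'

lemma timeDensity_le_of_one_lt {ξ : ℝ} (h1 : 1 < ξ) (hb : ξ ≤ peak C) :
    timeDensity C ξ ≤ Real.exp C * (√(peak C - ξ))⁻¹ := by
  rcases hb.lt_or_eq with hb | rfl
  · have hpos : 0 < (peak C - ξ) * Real.exp (-(2 * C)) := mul_pos (sub_pos.2 hb) (Real.exp_pos _)
    have hsqrt :
        √((peak C - ξ) * Real.exp (-(2 * C))) = √(peak C - ξ) * (Real.exp C)⁻¹ := by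
      rw [Real.sqrt_mul (sub_pos.2 hb).le, ← Real.exp_half, ← Real.exp_neg]
      ring_nf
    calc timeDensity C ξ ≤ 1 / √((peak C - ξ) * Real.exp (-(2 * C))) :=
          one_div_le_one_div_of_le (Real.sqrt_pos.2 hpos)
            (Real.sqrt_le_sqrt (sub_mul_exp_le_potential h1 hb.le))
      _ = Real.exp C * (√(peak C - ξ))⁻¹ := by rw [hsqrt]; field_simp
  · simp [timeDensity, potential_peak]

lemma timeDensity_le_of_le_one {v ξ : ℝ} (h0 : 0 < v) (hvξ : v ≤ ξ) (hξ : ξ ≤ 1) :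
    timeDensity C ξ ≤ timeDensity C v := by
  rcases hξ.lt_or_eq with hξ | rfl
  · exact one_div_le_one_div_of_le
      (Real.sqrt_pos.2 (potential_pos h0 (by linarith [one_lt_peak C]) (by linarith)))
      (Real.sqrt_le_sqrt (potential_le_potential h0.le hvξ hξ))
  · simp [timeDensity, potential_of_le_one]

lemma intervalIntegrable_timeDensity_one_peak :
    IntervalIntegrable (timeDensity C) volume 1 (peak C) := by
  refine ((intervalIntegrable_inv_sqrt_sub (one_lt_peak C).le).const_mul (Real.exp C)).mono_fun'
    (measurable_timeDensity.aestronglyMeasurable) ?_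
  rw [EventuallyLE, uIoc_of_le (one_lt_peak C).le, ae_restrict_iff' measurableSet_Ioc]
  filter_upwards with ξ hξ
  rw [Real.norm_of_nonneg (timeDensity_nonneg ξ)]
  exact timeDensity_le_of_one_lt hξ.1 hξ.2

lemma intervalIntegrable_timeDensity_of_le_one {v : ℝ} (h0 : 0 < v) (h1 : v ≤ 1) :
    IntervalIntegrable (timeDensity C) volume v 1 := by
  refine (intervalIntegrable_const (c := timeDensity C v)).mono_fun'
    (measurable_timeDensity.aestronglyMeasurable) ?_
  rw [EventuallyLE, uIoc_of_le h1, ae_restrict_iff' measurableSet_Ioc]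
  filter_upwards with ξ hξ
  rw [Real.norm_of_nonneg (timeDensity_nonneg ξ)]
  exact timeDensity_le_of_le_one h0 hξ.1.le hξ.2

lemma intervalIntegrable_timeDensity {v w : ℝ} (hv : v ∈ Ioc 0 (peak C))
    (hw : w ∈ Ioc 0 (peak C)) : IntervalIntegrable (timeDensity C) volume v w := by
  set m := min (min v w) 1
  have hm : 0 < m := lt_min (lt_min hv.1 hw.1) one_pos
  refine ((intervalIntegrable_timeDensity_of_le_one hm (min_le_right _ _)).trans
    intervalIntegrable_timeDensity_one_peak).mono_set ?_
  rw [uIcc_of_le ((min_le_right _ _).trans (one_lt_peak C).le)]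
  exact uIcc_subset_Icc ⟨(min_le_left _ _).trans (min_le_left _ _), hv.2⟩
    ⟨(min_le_left _ _).trans (min_le_right _ _), hw.2⟩

lemma timeMap_peak : timeMap C (peak C) = 0 := intervalIntegral.integral_same

lemma timeMap_sub_timeMap {v w : ℝ} (hv : v ∈ Ioc 0 (peak C)) (hw : w ∈ Ioc 0 (peak C)) :
    timeMap C v - timeMap C w = ∫ ξ in v..w, timeDensity C ξ := by
  rw [timeMap, timeMap, ← intervalIntegral.integral_add_adjacent_intervals
    (intervalIntegrable_timeDensity hv hw) (intervalIntegrable_timeDensity hw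
      (peak_mem_Ioc_peak C)), add_sub_cancel_right]

lemma strictAntiOn_timeMap : StrictAntiOn (timeMap C) (Ioc 0 (peak C)) := by
  intro v hv w hw hvw
  rw [← sub_pos, timeMap_sub_timeMap hv hw]
  exact intervalIntegral_pos_of_pos_off_countable timeDensity_nonneg
    (intervalIntegrable_timeDensity hv hw) (countable_singleton 1)
    (fun ξ hξ ↦ timeDensity_pos (hv.1.trans hξ.1.1) (hξ.1.2.trans_le hw.2) hξ.2) hvw

lemma timeMap_nonneg {v : ℝ} (hv : v ∈ Ioc 0 (peak C)) : 0 ≤ timeMap C v := by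
  rw [← timeMap_peak (C := C)]
  exact strictAntiOn_timeMap.antitoneOn hv (peak_mem_Ioc_peak C) hv.2

lemma continuousOn_timeMap : ContinuousOn (timeMap C) (Ioc 0 (peak C)) := by
  intro v hv
  have hv2 : v / 2 ∈ Ioc 0 (peak C) := ⟨half_pos hv.1, by linarith [hv.1, hv.2]⟩
  have hcont : ContinuousOn (timeMap C) (uIcc (v / 2) (peak C)) :=
    intervalIntegral.continuousOn_primitive_interval_left ((intervalIntegrable_iff').1
      (intervalIntegrable_timeDensity hv2 (peak_mem_Ioc_peak C)))
  have hmem : v ∈ uIcc (v / 2) (peak C) := by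
    rw [uIcc_of_le hv2.2]; exact ⟨by linarith [hv.1], hv.2⟩
  refine (hcont v hmem).mono_of_mem_nhdsWithin
    (mem_nhdsWithin.2 ⟨Ioi (v / 2), isOpen_Ioi, by simpa using hv.1, fun x hx ↦ ?_⟩)
  rw [uIcc_of_le hv2.2]
  exact ⟨hx.1.le, hx.2.2⟩

lemma hasDerivAt_timeMap {v : ℝ} (h0 : 0 < v) (hb : v < peak C) (h1 : v ≠ 1) :
    HasDerivAt (timeMap C) (-timeDensity C v) v :=
  intervalIntegral.integral_hasDerivAt_left
    (intervalIntegrable_timeDensity ⟨h0, hb.le⟩ (peak_mem_Ioc_peak C))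
    measurable_timeDensity.stronglyMeasurable.stronglyMeasurableAtFilter
    (continuousAt_timeDensity h0 hb h1)

lemma tendsto_timeMap_nhdsGT_zero : Tendsto (timeMap C) (𝓝[>] 0) atTop := by
  have hlog : Tendsto (fun v : ℝ ↦ Real.log (1 / 2 / v) / 2) (𝓝[>] 0) atTop := by
    simp only [div_eq_mul_inv (1 / 2 : ℝ)]
    exact (Real.tendsto_log_atTop.comp
      (tendsto_inv_nhdsGT_zero.const_mul_atTop (by norm_num))).atTop_div_const two_pos
  refine tendsto_atTop_mono' _ ?_ hlog
  filter_upwards [Ioc_mem_nhdsGT (by norm_num : (0 : ℝ) < 1 / 2)] with v hv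
  have hhalf : (1 / 2 : ℝ) ∈ Ioc 0 (peak C) := ⟨by norm_num, by linarith [one_lt_peak C]⟩
  have hvmem : v ∈ Ioc 0 (peak C) := ⟨hv.1, hv.2.trans hhalf.2⟩
  have hcomp : ∫ ξ in v..1 / 2, 2⁻¹ * ξ⁻¹ ≤ ∫ ξ in v..1 / 2, timeDensity C ξ := by
    refine intervalIntegral.integral_mono_on hv.2 ?_ (intervalIntegrable_timeDensity hvmem hhalf)
      fun ξ hξ ↦ ?_
    · refine (continuousOn_const.mul (continuousOn_inv₀.mono fun x hx ↦ ?_)).intervalIntegrable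
      rw [uIcc_of_le hv.2] at hx
      exact (hv.1.trans_le hx.1).ne'
    · have hξ0 : 0 < ξ := hv.1.trans_le hξ.1
      have hpos := potential_pos hξ0 (by linarith [one_lt_peak C, hξ.2]) (by linarith [hξ.2])
      calc 2⁻¹ * ξ⁻¹ = 1 / (2 * ξ) := by rw [one_div, mul_inv]
        _ ≤ timeDensity C ξ := by
          refine one_div_le_one_div_of_le (Real.sqrt_pos.2 hpos) ?_
          simpa [Real.sqrt_sq (by positivity : (0:ℝ) ≤ 2 * ξ)] using
            Real.sqrt_le_sqrt (potential_le_sq_of_le_half hξ0.le hξ.2)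
  rw [intervalIntegral.integral_const_mul, integral_inv_of_pos hv.1 (by norm_num)] at hcomp
  have := timeMap_sub_timeMap hvmem hhalf
  have := timeMap_nonneg hhalf
  linarith

lemma surjOn_timeMap : SurjOn (timeMap C) (Ioc 0 (peak C)) (Ici 0) := by
  intro y hy
  obtain ⟨v, hvy, hv⟩ := ((tendsto_timeMap_nhdsGT_zero.eventually_ge_atTop y).and
    (Ioo_mem_nhdsGT (zero_lt_one.trans (one_lt_peak C)))).exists
  have hsub : Icc v (peak C) ⊆ Ioc 0 (peak C) := fun w hw ↦ ⟨hv.1.trans_le hw.1, hw.2⟩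
  obtain ⟨w, hw, hwy⟩ := intermediate_value_Icc' hv.2.le (continuousOn_timeMap.mono hsub)
    ⟨timeMap_peak (C := C) ▸ hy, hvy⟩
  exact ⟨w, hsub hw, hwy⟩

lemma bijOn_timeMap : BijOn (timeMap C) (Ioc 0 (peak C)) (Ici 0) :=
  ⟨fun _ hv ↦ timeMap_nonneg hv, strictAntiOn_timeMap.injOn, surjOn_timeMap⟩

variable (C) in
def profile (x : ℝ) : ℝ := (timeMap C).invFunOn (Ioc 0 (peak C)) |x|

lemma profile_even : (profile C).Even := fun x ↦ by rw [profile, profile, abs_neg]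

lemma profile_abs (x : ℝ) : profile C |x| = profile C x := by rw [profile, profile, abs_abs]

lemma profile_mem (x : ℝ) : profile C x ∈ Ioc 0 (peak C) :=
  bijOn_timeMap.surjOn.mapsTo_invFunOn (abs_nonneg x)

lemma timeMap_profile (x : ℝ) : timeMap C (profile C x) = |x| :=
  bijOn_timeMap.invOn_invFunOn.2 (abs_nonneg x)

lemma profile_timeMap {v : ℝ} (hv : v ∈ Ioc 0 (peak C)) : profile C (timeMap C v) = v := by
  rw [profile, abs_of_nonneg (timeMap_nonneg hv)]
  exact bijOn_timeMap.invOn_invFunOn.1 hv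

lemma profile_zero : profile C 0 = peak C := by
  simpa [timeMap_peak] using profile_timeMap (peak_mem_Ioc_peak C)

lemma profile_lt_iff {x w : ℝ} (hw : w ∈ Ioc 0 (peak C)) :
    profile C x < w ↔ timeMap C w < |x| := by
  rw [← timeMap_profile, strictAntiOn_timeMap.lt_iff_gt hw (profile_mem x)]

lemma lt_profile_iff {x w : ℝ} (hw : w ∈ Ioc 0 (peak C)) :
    w < profile C x ↔ |x| < timeMap C w := by
  rw [← timeMap_profile, strictAntiOn_timeMap.lt_iff_gt (profile_mem x) hw]

lemma profile_eq_iff {x w : ℝ} (hw : w ∈ Ioc 0 (peak C)) :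
    profile C x = w ↔ |x| = timeMap C w := by
  rw [← timeMap_profile, strictAntiOn_timeMap.eq_iff_eq (profile_mem x) hw, eq_comm]

lemma timeMap_one_pos : 0 < timeMap C 1 := by
  simpa [timeMap_peak] using strictAntiOn_timeMap (one_mem_Ioc_peak C)
    (peak_mem_Ioc_peak C) (one_lt_peak C)

lemma profile_lt_peak {x : ℝ} (hx : x ≠ 0) : profile C x < peak C := by
  rw [profile_lt_iff (peak_mem_Ioc_peak C), timeMap_peak]
  exact abs_pos.2 hx

lemma profile_ne_one {x : ℝ} (hx : |x| ≠ timeMap C 1) : profile C x ≠ 1 :=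
  (profile_eq_iff (one_mem_Ioc_peak C)).not.2 hx

lemma one_sub_profile_sq_ne_zero {x : ℝ} (hx : |x| ≠ timeMap C 1) :
    1 - profile C x ^ 2 ≠ 0 := by
  rw [sub_ne_zero, ne_comm, ne_eq, pow_eq_one_iff_of_nonneg (profile_mem x).1.le two_ne_zero]
  exact profile_ne_one hx

lemma strictAntiOn_profile : StrictAntiOn (profile C) (Ici 0) := fun x hx y hy hxy ↦ by
  rw [profile_lt_iff (profile_mem x), timeMap_profile, abs_of_nonneg hx, abs_of_nonneg hy]
  exact hxy

lemma image_profile_Ici : profile C '' Ici 0 = Ioc 0 (peak C) :=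
  (image_subset_iff.2 fun x _ ↦ mem_preimage.2 (profile_mem x)).antisymm fun v hv ↦
    ⟨timeMap C v, timeMap_nonneg hv, profile_timeMap hv⟩

lemma continuous_profile : Continuous (profile C) := by
  have h := (strictAntiOn_profile.continuousOn_Ici_of_image_eq_Ioc
    (image_profile_Ici (C := C))).comp_continuous continuous_abs abs_nonneg
  simpa only [Function.comp_def, profile_abs] using h

lemma tendsto_profile_atTop : Tendsto (profile C) atTop (𝓝 0) := by
  refine tendsto_order.2
    ⟨fun a ha ↦ .of_forall fun x ↦ ha.trans (profile_mem x).1, fun c hc ↦ ?_⟩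
  have hw : min (c / 2) 1 ∈ Ioc 0 (peak C) :=
    ⟨lt_min (half_pos hc) one_pos, (min_le_right _ _).trans (one_lt_peak C).le⟩
  filter_upwards [eventually_gt_atTop (timeMap C (min (c / 2) 1))] with x hx
  exact ((profile_lt_iff hw).2 (hx.trans_le (le_abs_self x))).trans
    ((min_le_left _ _).trans_lt (half_lt_self hc))

lemma tendsto_profile_cocompact : Tendsto (profile C) (cocompact ℝ) (𝓝 0) := by
  rw [cocompact_eq_atBot_atTop, ← comap_abs_atTop]
  simpa only [Function.comp_def, profile_abs] using
    (tendsto_profile_atTop (C := C)).comp (tendsto_comap (f := abs))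

lemma potential_profile_pos {x : ℝ} (hx0 : x ≠ 0) (hxℓ : |x| ≠ timeMap C 1) :
    0 < potential C (profile C x) :=
  potential_pos (profile_mem x).1 (profile_lt_peak hx0) (profile_ne_one hxℓ)

lemma hasDerivAt_profile_of_pos {x : ℝ} (hx : 0 < x) (hxℓ : x ≠ timeMap C 1) :
    HasDerivAt (profile C) (-√(potential C (profile C x))) x := by
  have hv := profile_mem (C := C) x
  have hvb := profile_lt_peak (C := C) hx.ne'
  have hv1 := profile_ne_one (C := C) (by rwa [abs_of_pos hx])
  have hinv := (hasDerivAt_timeMap hv.1 hvb hv1).of_local_left_inverse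
    continuous_profile.continuousAt (neg_ne_zero.2 (timeDensity_pos hv.1 hvb hv1).ne') <| by
      filter_upwards [eventually_gt_nhds hx] with y hy
      rw [timeMap_profile, abs_of_pos hy]
  simpa [timeDensity] using hinv

lemma hasDerivAt_deriv_profile_of_pos {x : ℝ} (hx : 0 < x) (hxℓ : x ≠ timeMap C 1) :
    HasDerivAt (deriv (profile C)) (profile C x / (1 - profile C x ^ 2)) x := by
  have hv := profile_mem (C := C) x
  have hv1 := profile_ne_one (C := C) (by rwa [abs_of_pos hx])
  have h := hasDerivAt_deriv_of_deriv_eq_neg_sqrt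
    (by filter_upwards [eventually_gt_nhds hx, eventually_ne_nhds hxℓ] with y hy hyℓ
        exact hasDerivAt_profile_of_pos hy hyℓ)
    (hasDerivAt_potential ((pow_eq_one_iff_of_nonneg hv.1.le two_ne_zero).not.2 hv1))
    (potential_profile_pos hx.ne' (by rwa [abs_of_pos hx]))
  convert h using 1
  ring

lemma differentiableAt_profile_of_ne_zero {x : ℝ} (hx0 : x ≠ 0) (hxℓ : |x| ≠ timeMap C 1) :
    DifferentiableAt ℝ (profile C) x := by
  rcases hx0.lt_or_gt with hx | hx
  · rw [abs_of_neg hx] at hxℓ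
    exact (profile_even.hasDerivAt_of_neg
      (hasDerivAt_profile_of_pos (neg_pos.2 hx) hxℓ)).differentiableAt
  · rw [abs_of_pos hx] at hxℓ
    exact (hasDerivAt_profile_of_pos hx hxℓ).differentiableAt

lemma hasDerivAt_deriv_profile_of_ne_zero {x : ℝ} (hx0 : x ≠ 0) (hxℓ : |x| ≠ timeMap C 1) :
    HasDerivAt (deriv (profile C)) (profile C x / (1 - profile C x ^ 2)) x := by
  rcases hx0.lt_or_gt with hx | hx
  · rw [abs_of_neg hx] at hxℓ
    simpa only [profile_even.eq] using
      profile_even.deriv.hasDerivAt_of_neg (hasDerivAt_deriv_profile_of_pos (neg_pos.2 hx) hxℓ)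
  · rw [abs_of_pos hx] at hxℓ
    exact hasDerivAt_deriv_profile_of_pos hx hxℓ

lemma deriv_profile_sq {x : ℝ} (hx0 : x ≠ 0) (hxℓ : |x| ≠ timeMap C 1) :
    deriv (profile C) x ^ 2 = potential C (profile C x) := by
  have hpos {y : ℝ} (hy : 0 < y) (hyℓ : y ≠ timeMap C 1) :
      deriv (profile C) y ^ 2 = potential C (profile C y) := by
    rw [(hasDerivAt_profile_of_pos hy hyℓ).deriv, neg_sq,
      Real.sq_sqrt (potential_profile_pos hy.ne' (by rwa [abs_of_pos hy])).le]
  rcases hx0.lt_or_gt with hx | hx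
  · rw [abs_of_neg hx] at hxℓ
    rw [← neg_sq, ← profile_even.deriv.eq, ← profile_even.eq x]
    exact hpos (neg_pos.2 hx) hxℓ
  · rw [abs_of_pos hx] at hxℓ
    exact hpos hx hxℓ

lemma eventually_abs_lt_timeMap_one : ∀ᶠ y in 𝓝 (0 : ℝ), |y| < timeMap C 1 :=
  (continuous_abs.tendsto' 0 0 abs_zero).eventually (eventually_lt_nhds timeMap_one_pos)

lemma tendsto_deriv_profile_nhdsNE_zero : Tendsto (deriv (profile C)) (𝓝[≠] 0) (𝓝 0) := by
  have hsqrt : Tendsto (fun y ↦ √(potential C (profile C y))) (𝓝[≠] 0) (𝓝 0) := by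
    have hV := (hasDerivAt_potential (C := C)
      (one_lt_pow₀ (one_lt_peak C) two_ne_zero).ne').continuousAt
    have := (hV.comp_of_eq continuous_profile.continuousAt profile_zero).sqrt.tendsto
    simpa [Function.comp_def, profile_zero, potential_peak] using this.mono_left nhdsWithin_le_nhds
  refine tendsto_zero_iff_abs_tendsto_zero _ |>.2 (hsqrt.congr' ?_)
  filter_upwards [self_mem_nhdsWithin, nhdsWithin_le_nhds eventually_abs_lt_timeMap_one]
    with y hy0 hyℓ
  rw [Function.comp_apply, ← deriv_profile_sq hy0 hyℓ.ne, Real.sqrt_sq_eq_abs]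

lemma hasDerivAt_profile_zero : HasDerivAt (profile C) 0 0 :=
  hasDerivAt_of_tendsto_deriv_nhdsNE
    (by filter_upwards [self_mem_nhdsWithin, nhdsWithin_le_nhds eventually_abs_lt_timeMap_one]
          with y hy0 hyℓ
        exact differentiableAt_profile_of_ne_zero hy0 hyℓ.ne)
    continuous_profile.continuousAt tendsto_deriv_profile_nhdsNE_zero

lemma hasDerivAt_deriv_profile_zero :
    HasDerivAt (deriv (profile C)) (profile C 0 / (1 - profile C 0 ^ 2)) 0 := by
  have hcont : ContinuousAt (fun y ↦ profile C y / (1 - profile C y ^ 2)) 0 :=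
    continuous_profile.continuousAt.div
      (continuousAt_const.sub (continuous_profile.continuousAt.pow 2))
      (one_sub_profile_sq_ne_zero (by simpa using timeMap_one_pos.ne))
  refine hasDerivAt_of_tendsto_deriv_nhdsNE ?_ ?_ ?_
  · filter_upwards [self_mem_nhdsWithin, nhdsWithin_le_nhds eventually_abs_lt_timeMap_one]
      with y hy0 hyℓ
    exact (hasDerivAt_deriv_profile_of_ne_zero hy0 hyℓ.ne).differentiableAt
  · rw [← continuousWithinAt_compl_self, ContinuousWithinAt, hasDerivAt_profile_zero.deriv]
    exact tendsto_deriv_profile_nhdsNE_zero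
  · refine (hcont.tendsto.mono_left nhdsWithin_le_nhds).congr' ?_
    filter_upwards [self_mem_nhdsWithin, nhdsWithin_le_nhds eventually_abs_lt_timeMap_one]
      with y hy0 hyℓ
    exact (hasDerivAt_deriv_profile_of_ne_zero hy0 hyℓ.ne).deriv.symm

lemma differentiableAt_profile {x : ℝ} (hxℓ : |x| ≠ timeMap C 1) :
    DifferentiableAt ℝ (profile C) x := by
  rcases eq_or_ne x 0 with rfl | hx0
  · exact hasDerivAt_profile_zero.differentiableAt
  · exact differentiableAt_profile_of_ne_zero hx0 hxℓ

lemma hasDerivAt_deriv_profile {x : ℝ} (hxℓ : |x| ≠ timeMap C 1) :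
    HasDerivAt (deriv (profile C)) (profile C x / (1 - profile C x ^ 2)) x := by
  rcases eq_or_ne x 0 with rfl | hx0
  · exact hasDerivAt_deriv_profile_zero
  · exact hasDerivAt_deriv_profile_of_ne_zero hx0 hxℓ

lemma contDiffOn_profile : ContDiffOn ℝ 2 (profile C) ({-timeMap C 1, timeMap C 1})ᶜ := by
  have hsing {x : ℝ} := notMem_neg_pair_iff_abs_ne (x := x) (timeMap_one_pos (C := C)).le
  refine contDiffOn_two_of_hasDerivAt_deriv
    (isOpen_compl_iff.2 ((finite_singleton _).insert _).isClosed)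
    (fun x hx ↦ (differentiableAt_profile (hsing.1 hx)).differentiableWithinAt)
    (fun x hx ↦ hasDerivAt_deriv_profile (hsing.1 hx)) ?_
  exact continuous_profile.continuousOn.div
    (continuous_const.sub (continuous_profile.pow 2)).continuousOn
    fun x hx ↦ one_sub_profile_sq_ne_zero (hsing.1 hx)

lemma timeMap_one_eq_integral : timeMap C 1 = ∫ ξ in (1 : ℝ)..√(1 + Real.exp (2 * C)),
    1 / √(2 * C - Real.log (ξ ^ 2 - 1)) := by
  refine intervalIntegral.integral_congr_ae (.of_forall fun ξ hξ ↦ ?_)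
  rw [uIoc_of_le (one_lt_peak C).le] at hξ
  rw [timeDensity, potential_of_one_lt hξ.1]

end SolitaryWave

end

open SolitaryWave

theorem exists_solitary_wave_family
    (C lC : ℝ)
    (hlC : lC = ∫ ξ in (1 : ℝ)..Real.sqrt (1 + Real.exp (2 * C)),
      1 / Real.sqrt (2 * C - Real.log (ξ ^ 2 - 1))) :
    ∃ u : ℝ → ℝ,
      Continuous u ∧
      (∀ x : ℝ, u (-x) = u x) ∧
      u 0 = Real.sqrt (1 + Real.exp (2 * C)) ∧
      u lC = 1 ∧ u (-lC) = 1 ∧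
      (∀ x : ℝ, |x| < lC → 1 < u x ∧ u x ≤ Real.sqrt (1 + Real.exp (2 * C))) ∧
      (∀ x : ℝ, lC < |x| → 0 < u x ∧ u x < 1) ∧
      Tendsto u (cocompact ℝ) (nhds 0) ∧
      ContDiffOn ℝ 2 u ({-lC, lC} : Set ℝ)ᶜ ∧
      (∀ x : ℝ, x ∉ ({-lC, lC} : Set ℝ) → (1 - u x ^ 2) * deriv (deriv u) x = u x) ∧
      (∀ x : ℝ, 0 < |x| → |x| < lC →
        (deriv u x) ^ 2 = 2 * C - Real.log (u x ^ 2 - 1)) ∧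
      (∀ x : ℝ, lC < |x| →
        (deriv u x) ^ 2 = -Real.log (1 - u x ^ 2)) := by
  obtain rfl : lC = timeMap C 1 := hlC.trans timeMap_one_eq_integral.symm
  have hℓ : profile C (timeMap C 1) = 1 := profile_timeMap (one_mem_Ioc_peak C)
  refine ⟨profile C, continuous_profile, profile_even, profile_zero, hℓ,
    (profile_even.eq _).trans hℓ,
    fun x hx ↦ ⟨(lt_profile_iff (one_mem_Ioc_peak C)).2 hx, (profile_mem x).2⟩,
    fun x hx ↦ ⟨(profile_mem x).1, (profile_lt_iff (one_mem_Ioc_peak C)).2 hx⟩,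
    tendsto_profile_cocompact, contDiffOn_profile, fun x hx ↦ ?_, fun x hx0 hx ↦ ?_,
    fun x hx ↦ ?_⟩
  · rw [notMem_neg_pair_iff_abs_ne timeMap_one_pos.le] at hx
    rw [(hasDerivAt_deriv_profile hx).deriv, mul_div_cancel₀ _ (one_sub_profile_sq_ne_zero hx)]
  · rw [deriv_profile_sq (abs_pos.1 hx0) hx.ne,
      potential_of_one_lt ((lt_profile_iff (one_mem_Ioc_peak C)).2 hx)]
  · rw [deriv_profile_sq (abs_pos.1 (timeMap_one_pos.trans hx)) hx.ne',
      potential_of_le_one ((profile_lt_iff (one_mem_Ioc_peak C)).2 hx).le]
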